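/- arXiv:2009.13378 — 4 statements merged into one kernel-verified Lean document; each statement's English description precedes it below -/
import Mathlib

section
/- The function P₀(x) = (x·coth(x) − 1)/x² satisfies 0 < P₀(x) < 1/3 for all x > 0. -/
noncomputable def P0 (x : ℝ) : ℝ := (x * (Real.cosh x / Real.sinh x) - 1) / x ^ 2

/-!
Clearing denominators, `P0 x = (x cosh x - sinh x) / (x² sinh x)`, so the two bounds are
`sinh x < x cosh x` and `3 (x cosh x - sinh x) < x² sinh x`. Both differences vanish at `0`,
and their derivatives `x sinh x` and `x (x cosh x - sinh x)` are positive for `x > 0`, the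
second one by the first bound.
-/

open Real Set

theorem strictMonoOn_Ici_of_hasDerivAt_pos {f f' : ℝ → ℝ} {a : ℝ}
    (hf : ∀ y, HasDerivAt f (f' y) y) (hf' : ∀ y, a < y → 0 < f' y) :
    StrictMonoOn f (Ici a) :=
  strictMonoOn_of_hasDerivWithinAt_pos (convex_Ici a)
    (fun y _ => (hf y).continuousAt.continuousWithinAt)
    (fun y _ => (hf y).hasDerivWithinAt)
    (fun y hy => hf' y (by simpa using hy))

theorem sinh_lt_mul_cosh {x : ℝ} (hx : 0 < x) : sinh x < x * cosh x := by
  have hmono : StrictMonoOn (fun y => y * cosh y - sinh y) (Ici 0) :=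
    strictMonoOn_Ici_of_hasDerivAt_pos (f' := fun y => y * sinh y)
      (fun y => (((hasDerivAt_id y).mul (hasDerivAt_cosh y)).sub
        (hasDerivAt_sinh y)).congr_deriv (by simp))
      (fun y hy => mul_pos hy (sinh_pos_iff.mpr hy))
  simpa using hmono self_mem_Ici hx.le hx

theorem three_mul_sub_lt_sq_mul_sinh {x : ℝ} (hx : 0 < x) :
    3 * (x * cosh x - sinh x) < x ^ 2 * sinh x := by
  have hmono : StrictMonoOn (fun y => y ^ 2 * sinh y - 3 * (y * cosh y - sinh y)) (Ici 0) :=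
    strictMonoOn_Ici_of_hasDerivAt_pos (f' := fun y => y * (y * cosh y - sinh y))
      (fun y => (((hasDerivAt_pow 2 y).mul (hasDerivAt_sinh y)).sub
        ((((hasDerivAt_id y).mul (hasDerivAt_cosh y)).sub
          (hasDerivAt_sinh y)).const_mul 3)).congr_deriv (by simp; ring))
      (fun y hy => mul_pos hy (sub_pos.mpr (sinh_lt_mul_cosh hy)))
  simpa using hmono self_mem_Ici hx.le hx

theorem P0_eq_div (x : ℝ) : P0 x = (x * cosh x - sinh x) / (x ^ 2 * sinh x) := by
  rcases eq_or_ne x 0 with rfl | hx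
  · simp [P0]
  have hs : sinh x ≠ 0 := sinh_ne_zero.mpr hx
  rw [P0]
  field_simp

theorem P0_pos_lt_third : ∀ x : ℝ, 0 < x → 0 < P0 x ∧ P0 x < 1 / 3 := by
  intro x hx
  have hden : 0 < x ^ 2 * sinh x := by
    have := sinh_pos_iff.mpr hx
    positivity
  rw [P0_eq_div]
  constructor
  · exact div_pos (sub_pos.mpr (sinh_lt_mul_cosh hx)) hden
  · rw [div_lt_iff₀ hden]
    linarith [three_mul_sub_lt_sq_mul_sinh hx]
end

section
/- Let Φ : ℝ → ℝ be continuous, positive, and T-periodic with T > 0, let μ > 0 and σ̃ > 0, and let R : [0,∞) → ℝ be a positive solution of R'(t) = μ R(t)(Φ(t) P₀(R(t)) − σ̃/3), where P₀(x) = (x·coth(x) − 1)/x². Then R(t + T) ≤ R(t) for all t ≥ 0, provided σ̃ = (1/T)∫₀ᵀ Φ(t) dt. -/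
/-!
Along the solution, `(log R)' = μ (Φ P₀(R) - σ̃/3) ≤ (μ/3) (Φ - σ̃)` because `Φ > 0` and
`P₀ ≤ 1/3`. Integrating over any window of length `T`, the right-hand side has integral zero,
since `σ̃` is the mean of `Φ` over a period; hence `log R (t + T) ≤ log R t`.
-/

open Real Set Function

lemma nonneg_of_hasDerivAt_of_deriv_nonneg {g g' : ℝ → ℝ} (hg : ∀ x, HasDerivAt g (g' x) x)
    (hg0 : g 0 = 0) (hg' : ∀ x, 0 < x → 0 ≤ g' x) {x : ℝ} (hx : 0 ≤ x) : 0 ≤ g x := by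
  have hmono : MonotoneOn g (Ici 0) :=
    monotoneOn_of_hasDerivWithinAt_nonneg (convex_Ici 0)
      (fun y _ ↦ (hg y).continuousAt.continuousWithinAt) (fun y _ ↦ (hg y).hasDerivWithinAt)
      (fun y hy ↦ hg' y (by simpa using hy))
  simpa [hg0] using hmono self_mem_Ici hx hx

lemma Real.sinh_le_mul_cosh {x : ℝ} (hx : 0 ≤ x) : sinh x ≤ x * cosh x := by
  have hderiv (y : ℝ) : HasDerivAt (fun y ↦ y * cosh y - sinh y) (y * sinh y) y := by
    refine (((hasDerivAt_id y).mul (hasDerivAt_cosh y)).sub (hasDerivAt_sinh y)).congr_deriv ?_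
    simp
  have := nonneg_of_hasDerivAt_of_deriv_nonneg hderiv (by simp)
    (fun y hy ↦ mul_nonneg hy.le (sinh_pos_iff.2 hy).le) hx
  linarith

lemma Real.three_mul_mul_cosh_le {x : ℝ} (hx : 0 ≤ x) :
    3 * x * cosh x ≤ (3 + x ^ 2) * sinh x := by
  have hderiv (y : ℝ) : HasDerivAt (fun y ↦ (3 + y ^ 2) * sinh y - 3 * y * cosh y)
      (y * (y * cosh y - sinh y)) y := by
    have hpoly : HasDerivAt (fun y : ℝ ↦ 3 + y ^ 2) (2 * y) y := by
      simpa using (hasDerivAt_pow 2 y).const_add 3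
    refine ((hpoly.mul (hasDerivAt_sinh y)).sub
      (((hasDerivAt_id y).const_mul 3).mul (hasDerivAt_cosh y))).congr_deriv ?_
    simp only [id, mul_one]
    ring
  have := nonneg_of_hasDerivAt_of_deriv_nonneg hderiv (by simp)
    (fun y hy ↦ mul_nonneg hy.le (sub_nonneg.2 (sinh_le_mul_cosh hy.le))) hx
  linarith

lemma P0_le_one_third {x : ℝ} (hx : 0 < x) : P0 x ≤ 1 / 3 := by
  have hsinh : 0 < sinh x := sinh_pos_iff.2 hx
  have := three_mul_mul_cosh_le hx.le
  rw [P0, div_le_iff₀ (by positivity), sub_le_iff_le_add, ← mul_div_assoc, div_le_iff₀ hsinh]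
  linarith

lemma antitoneOn_log_sub_integral {R R' g : ℝ → ℝ} {a : ℝ} (hg : Continuous g)
    (hR : ∀ t, a ≤ t → 0 < R t) (hR' : ∀ t, a ≤ t → HasDerivAt R (R' t) t)
    (hle : ∀ t, a < t → R' t ≤ g t * R t) :
    AntitoneOn (fun t ↦ log (R t) - ∫ s in a..t, g s) (Ici a) := by
  have hderiv (t : ℝ) (ht : a ≤ t) :
      HasDerivAt (fun t ↦ log (R t) - ∫ s in a..t, g s) (R' t / R t - g t) t :=
    ((hR' t ht).log (hR t ht).ne').sub (hg.integral_hasStrictDerivAt a t).hasDerivAt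
  refine antitoneOn_of_hasDerivWithinAt_nonpos (convex_Ici a)
    (fun t ht ↦ (hderiv t ht).continuousAt.continuousWithinAt)
    (fun t ht ↦ (hderiv t (interior_subset ht)).hasDerivWithinAt) (fun t ht ↦ ?_)
  rw [interior_Ici] at ht
  rw [sub_nonpos, div_le_iff₀ (hR t ht.le)]
  exact hle t ht

lemma Function.Periodic.integral_sub_average_eq_zero {Φ : ℝ → ℝ} {T : ℝ} (hΦ : Periodic Φ T)
    (hT : T ≠ 0) {t : ℝ} (hint : IntervalIntegrable Φ MeasureTheory.volume t (t + T)) :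
    ∫ s in t..t + T, (Φ s - (1 / T) * ∫ s in (0 : ℝ)..T, Φ s) = 0 := by
  rw [intervalIntegral.integral_sub hint intervalIntegrable_const, hΦ.intervalIntegral_add_eq t 0,
    intervalIntegral.integral_const, zero_add, smul_eq_mul]
  field_simp
  ring

theorem R_decreasing_over_period_general
    (T : ℝ) (hT : 0 < T) (Φ : ℝ → ℝ) (hΦc : Continuous Φ)
    (hΦpos : ∀ t, 0 < Φ t) (hΦper : ∀ t, Φ (t + T) = Φ t)
    (μ σ : ℝ) (hμ : 0 < μ)
    (hmean : σ = (1 / T) * ∫ t in (0 : ℝ)..T, Φ t)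
    (R : ℝ → ℝ) (hRpos : ∀ t, 0 ≤ t → 0 < R t)
    (hODE : ∀ t, 0 ≤ t → HasDerivAt R (μ * R t * (Φ t * P0 (R t) - σ / 3)) t) :
    ∀ t, 0 ≤ t → R (t + T) ≤ R t := by
  intro t ht
  set g : ℝ → ℝ := fun s ↦ μ / 3 * (Φ s - σ)
  have hcompare (s : ℝ) (hs : 0 < s) :
      μ * R s * (Φ s * P0 (R s) - σ / 3) ≤ g s * R s := by
    have hRs := hRpos s hs.le
    have hP0 : Φ s * P0 (R s) ≤ Φ s * (1 / 3) :=
      mul_le_mul_of_nonneg_left (P0_le_one_third hRs) (hΦpos s).le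
    calc μ * R s * (Φ s * P0 (R s) - σ / 3) = μ * (Φ s * P0 (R s) - σ / 3) * R s := by ring
      _ ≤ g s * R s := by gcongr; simp only [g]; nlinarith
  have hg : Continuous g := by fun_prop
  have hanti := antitoneOn_log_sub_integral hg hRpos hODE hcompare
    (mem_Ici.2 ht) (mem_Ici.2 (by linarith : 0 ≤ t + T)) (by linarith : t ≤ t + T)
  have hwindow : (∫ s in 0..t + T, g s) - ∫ s in 0..t, g s = 0 := by
    rw [intervalIntegral.integral_interval_sub_left (hg.intervalIntegrable _ _)
      (hg.intervalIntegrable _ _), intervalIntegral.integral_const_mul, hmean,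
      Periodic.integral_sub_average_eq_zero hΦper hT.ne' (hΦc.intervalIntegrable _ _), mul_zero]
  have hlog : log (R (t + T)) ≤ log (R t) := by
    simp only at hanti
    linarith
  exact (log_le_log_iff (hRpos _ (by linarith)) (hRpos t ht)).1 hlog

theorem R_decreasing_over_period
    (T : ℝ) (hT : 0 < T) (Φ : ℝ → ℝ) (hΦc : Continuous Φ)
    (hΦpos : ∀ t, 0 < Φ t) (hΦper : ∀ t, Φ (t + T) = Φ t)
    (μ σ : ℝ) (hμ : 0 < μ) (hσ : 0 < σ)
    (hmean : σ = (1 / T) * ∫ t in (0 : ℝ)..T, Φ t)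
    (R : ℝ → ℝ) (hRpos : ∀ t, 0 ≤ t → 0 < R t)
    (hODE : ∀ t, 0 ≤ t → HasDerivAt R (μ * R t * (Φ t * P0 (R t) - σ / 3)) t) :
    ∀ t, 0 ≤ t → R (t + T) ≤ R t :=
  R_decreasing_over_period_general T hT Φ hΦc hΦpos hΦper μ σ hμ hmean R hRpos hODE
end

section
/- Define Pₙ(r) = I_{n+3/2}(r)/(r·I_{n+1/2}(r)) for integers n ≥ 0 and r > 0. Then 0 < Pₙ(r) ≤ 1/(2n+3) for all r > 0. -/
noncomputable def besselI (ν r : ℝ) : ℝ :=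
  (r / 2) ^ ν * ∑' k : ℕ, (r / 2) ^ (2 * k) / (k.factorial * Real.Gamma (ν + k + 1))

noncomputable def Pfun (n : ℕ) (r : ℝ) : ℝ :=
  besselI ((n : ℝ) + 3 / 2) r / (r * besselI ((n : ℝ) + 1 / 2) r)

/-!
Write `I_ν(r) = (r/2)^ν Σ_k a_k(ν)` with `a_k(ν) = (r/2)^{2k} / (k! Γ(ν+k+1))`. All terms are
positive, and `Γ(ν+k+2) = (ν+k+1) Γ(ν+k+1) ≥ (ν+1) Γ(ν+k+1)` gives `a_k(ν+1) ≤ a_k(ν)/(ν+1)`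
termwise. Summing, `I_{ν+1}(r) ≤ r/(2(ν+1)) · I_ν(r)`; with `ν = n + 1/2` this is the bound.
-/

open Real

namespace Bessel

noncomputable def term (ν r : ℝ) (k : ℕ) : ℝ :=
  (r / 2) ^ (2 * k) / (k.factorial * Gamma (ν + k + 1))

lemma besselI_eq_mul_tsum_term (ν r : ℝ) : besselI ν r = (r / 2) ^ ν * ∑' k, term ν r k := rfl

lemma Gamma_add_nat_add_one_pos {ν : ℝ} (hν : -1 < ν) (k : ℕ) : 0 < Gamma (ν + k + 1) :=
  Gamma_pos_of_pos (by linarith [k.cast_nonneg (α := ℝ)])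

lemma term_nonneg {ν : ℝ} (hν : -1 < ν) (r : ℝ) (k : ℕ) : 0 ≤ term ν r k := by
  have := Gamma_add_nat_add_one_pos hν k
  have := (even_two_mul k).pow_nonneg (r / 2)
  unfold term
  positivity

lemma term_zero_pos {ν : ℝ} (hν : -1 < ν) (r : ℝ) : 0 < term ν r 0 := by
  have := Gamma_add_nat_add_one_pos hν 0
  simpa [term] using this

lemma Gamma_add_one_le_Gamma_add_nat_add_one {ν : ℝ} (hν : 0 ≤ ν) (k : ℕ) :
    Gamma (ν + 1) ≤ Gamma (ν + k + 1) := by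
  induction k with
  | zero => simp
  | succ k ih =>
    have hpos : 0 < ν + k + 1 := by positivity
    calc Gamma (ν + 1) ≤ 1 * Gamma (ν + k + 1) := by rwa [one_mul]
      _ ≤ (ν + k + 1) * Gamma (ν + k + 1) := by
        gcongr
        linarith
      _ = Gamma (ν + (k + 1 : ℕ) + 1) := by
        rw [← Gamma_add_one hpos.ne']
        push_cast
        ring_nf

lemma term_le {ν : ℝ} (hν : 0 ≤ ν) (r : ℝ) (k : ℕ) :
    term ν r k ≤ ((r / 2) ^ 2) ^ k / k.factorial * (1 / Gamma (ν + 1)) := by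
  have hΓ : 0 < Gamma (ν + 1) := Gamma_pos_of_pos (by positivity)
  rw [term, pow_mul, div_mul_div_comm, mul_one]
  gcongr
  exact Gamma_add_one_le_Gamma_add_nat_add_one hν k

lemma summable_term {ν : ℝ} (hν : 0 ≤ ν) (r : ℝ) : Summable (term ν r) :=
  .of_nonneg_of_le (term_nonneg (by linarith) r) (term_le hν r)
    ((summable_pow_div_factorial _).mul_right _)

lemma term_add_one_le {ν : ℝ} (hν : -1 < ν) (r : ℝ) (k : ℕ) :
    term (ν + 1) r k ≤ term ν r k / (ν + 1) := by
  have hpos : 0 < ν + k + 1 := by linarith [k.cast_nonneg (α := ℝ)]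
  have hrec : Gamma (ν + 1 + k + 1) = (ν + k + 1) * Gamma (ν + k + 1) := by
    rw [← Gamma_add_one hpos.ne']
    ring_nf
  have := (even_two_mul k).pow_nonneg (r / 2)
  rw [term, term, hrec, div_div]
  have hν₁ : 0 < ν + 1 := by linarith
  refine div_le_div_of_nonneg_left this (by positivity) ?_
  rw [mul_assoc, mul_comm (Gamma _)]
  gcongr
  linarith [k.cast_nonneg (α := ℝ)]

lemma besselI_pos {ν r : ℝ} (hν : 0 ≤ ν) (hr : 0 < r) : 0 < besselI ν r :=
  mul_pos (rpow_pos_of_pos (by positivity) ν)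
    ((summable_term hν r).tsum_pos (term_nonneg (by linarith) r) 0 (term_zero_pos (by linarith) r))

lemma besselI_add_one_le {ν r : ℝ} (hν : 0 ≤ ν) (hr : 0 < r) :
    besselI (ν + 1) r ≤ r / (2 * (ν + 1)) * besselI ν r := by
  have hsum : ∑' k, term (ν + 1) r k ≤ (∑' k, term ν r k) / (ν + 1) := by
    rw [← tsum_div_const]
    exact (summable_term (by linarith) r).tsum_le_tsum (term_add_one_le (by linarith) r)
      ((summable_term hν r).div_const _)
  have hpow : (r / 2) ^ (ν + 1) = (r / 2) ^ ν * (r / 2) := by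
    rw [rpow_add (by positivity), rpow_one]
  have := rpow_pos_of_pos (show 0 < r / 2 by positivity) ν
  calc besselI (ν + 1) r = (r / 2) ^ ν * (r / 2) * ∑' k, term (ν + 1) r k := by
        rw [besselI_eq_mul_tsum_term, hpow]
    _ ≤ (r / 2) ^ ν * (r / 2) * ((∑' k, term ν r k) / (ν + 1)) := by gcongr
    _ = r / (2 * (ν + 1)) * besselI ν r := by
        rw [besselI_eq_mul_tsum_term]
        field_simp

lemma besselI_add_one_div_le {ν r : ℝ} (hν : 0 ≤ ν) (hr : 0 < r) :
    besselI (ν + 1) r / (r * besselI ν r) ≤ 1 / (2 * (ν + 1)) := by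
  have hI := besselI_pos hν hr
  rw [div_le_div_iff₀ (by positivity) (by positivity)]
  calc besselI (ν + 1) r * (2 * (ν + 1))
      ≤ r / (2 * (ν + 1)) * besselI ν r * (2 * (ν + 1)) := by
        gcongr
        exact besselI_add_one_le hν hr
    _ = 1 * (r * besselI ν r) := by field_simp

end Bessel

open Bessel

theorem Pfun_pos_le (n : ℕ) (r : ℝ) (hr : 0 < r) :
    0 < Pfun n r ∧ Pfun n r ≤ 1 / (2 * (n : ℝ) + 3) := by
  have hν : (0 : ℝ) ≤ n + 1 / 2 := by positivity
  have hPfun : Pfun n r = besselI ((n + 1 / 2) + 1) r / (r * besselI (n + 1 / 2) r) := by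
    rw [Pfun]; ring_nf
  rw [hPfun, show (2 * n + 3 : ℝ) = 2 * ((n + 1 / 2) + 1) by ring]
  exact ⟨div_pos (besselI_pos (by positivity) hr) (mul_pos hr (besselI_pos hν hr)),
    besselI_add_one_div_le hν hr⟩
end

section
/- Define Pₙ(r) = I_{n+3/2}(r)/(r·I_{n+1/2}(r)). Then for every integer n ≥ 0 and every r > 0, Pₙ(r) > P_{n+1}(r). -/
open Finset Nat Polynomial

namespace Real

theorem Gamma_add_nat_eq_ascPochhammer_mul {x : ℝ} (hx : 0 < x) (n : ℕ) :
    Gamma (x + n) = (ascPochhammer ℝ n).eval x * Gamma x := by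
  induction n with
  | zero => simp
  | succ n ih =>
    rw [ascPochhammer_succ_eval, Nat.cast_succ, ← add_assoc, Gamma_add_one (by positivity), ih]
    ring

theorem Gamma_add_nat_eq_factorial_mul_choose {x : ℝ} (hx : 0 < x) (n : ℕ) :
    Gamma (x + n) = n ! * Ring.choose (x + n - 1) n * Gamma x := by
  rw [Gamma_add_nat_eq_ascPochhammer_mul hx, ← ascPochhammer_smeval_eq_eval,
    ← Ring.factorial_nsmul_multichoose_eq_ascPochhammer, Ring.multichoose_eq, nsmul_eq_mul]

theorem Gamma_add_one_sq_lt {x : ℝ} (hx : 0 < x) :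
    Gamma (x + 1) ^ 2 < Gamma x * Gamma (x + 2) := by
  have hG := Gamma_pos_of_pos hx
  rw [show x + 2 = x + 1 + 1 by ring, Gamma_add_one (s := x + 1) (by positivity),
    Gamma_add_one hx.ne']
  nlinarith [mul_pos (mul_pos hx hG) hG]

theorem choose_pos_of_lt {s : ℝ} {n : ℕ} (h : (n : ℝ) - 1 < s) : 0 < Ring.choose s n := by
  have hx : 0 < s - n + 1 := by linarith
  have hΓ := Gamma_add_nat_eq_factorial_mul_choose hx n
  rw [show s - n + 1 + n - 1 = s by ring, show s - n + 1 + n = s + 1 by ring] at hΓ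
  have : 0 < n ! * Ring.choose s n * Gamma (s - n + 1) := hΓ ▸ Gamma_pos_of_pos (by linarith)
  exact pos_of_mul_pos_right (pos_of_mul_pos_left this (Gamma_pos_of_pos hx).le) (by positivity)

end Real

theorem pow_le_ascPochhammer_eval {S : Type*} [Semiring S] [PartialOrder S] [IsOrderedRing S]
    {x : S} (hx : 0 ≤ x) (n : ℕ) : x ^ n ≤ (ascPochhammer S n).eval x := by
  induction n with
  | zero => simp
  | succ n ih =>
    rw [pow_succ, ascPochhammer_succ_eval]
    exact mul_le_mul ih (le_add_of_nonneg_right n.cast_nonneg) hx ((pow_nonneg hx n).trans ih)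

noncomputable def besselSeriesTerm (a t : ℝ) (k : ℕ) : ℝ :=
  t ^ k / (k ! * Real.Gamma (a + k))

noncomputable def besselSeries (a t : ℝ) : ℝ :=
  ∑' k, besselSeriesTerm a t k

section BesselSeries

open Real

variable {a t : ℝ}

theorem besselSeriesTerm_pos (ha : 0 < a) (ht : 0 < t) (k : ℕ) : 0 < besselSeriesTerm a t k := by
  have := Gamma_pos_of_pos (show 0 < a + k by positivity)
  unfold besselSeriesTerm
  positivity

theorem besselSeriesTerm_le (ha : 0 < a) (ht : 0 < t) (k : ℕ) :
    besselSeriesTerm a t k ≤ (Gamma a)⁻¹ * ((t / a) ^ k / k !) := by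
  have hΓ := Gamma_pos_of_pos ha
  calc besselSeriesTerm a t k = t ^ k / (k ! * ((ascPochhammer ℝ k).eval a * Gamma a)) := by
        rw [besselSeriesTerm, Gamma_add_nat_eq_ascPochhammer_mul ha]
    _ ≤ t ^ k / (k ! * (a ^ k * Gamma a)) := by
        gcongr; exact pow_le_ascPochhammer_eval ha.le k
    _ = (Gamma a)⁻¹ * ((t / a) ^ k / k !) := by
        rw [div_pow]; field_simp

theorem summable_besselSeriesTerm (ha : 0 < a) (ht : 0 < t) : Summable (besselSeriesTerm a t) :=
  .of_nonneg_of_le (fun k => (besselSeriesTerm_pos ha ht k).le) (besselSeriesTerm_le ha ht)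
    ((summable_pow_div_factorial _).mul_left _)

theorem besselSeries_pos (ha : 0 < a) (ht : 0 < t) : 0 < besselSeries a t :=
  (summable_besselSeriesTerm ha ht).tsum_pos (fun k => (besselSeriesTerm_pos ha ht k).le) 0
    (besselSeriesTerm_pos ha ht 0)

theorem sum_antidiagonal_besselSeriesTerm_mul {x y : ℝ} (hx : 0 < x) (hy : 0 < y) (m : ℕ) :
    ∑ p ∈ antidiagonal m, besselSeriesTerm x t p.1 * besselSeriesTerm y t p.2
      = t ^ m * Ring.choose (x + y + 2 * m - 2) m / (Gamma (x + m) * Gamma (y + m)) := by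
  -- `Γ(x+m) = j! C(x+m-1, j) Γ(x+i)` and its twin turn each product into a Vandermonde summand.
  have hterm : ∀ p ∈ antidiagonal m, besselSeriesTerm x t p.1 * besselSeriesTerm y t p.2
      = t ^ m * (Ring.choose (y + m - 1) p.1 * Ring.choose (x + m - 1) p.2)
          / (Gamma (x + m) * Gamma (y + m)) := by
    rintro ⟨i, j⟩ hij
    rw [HasAntidiagonal.mem_antidiagonal] at hij
    subst hij
    have hxi : 0 < x + i := by positivity
    have hyj : 0 < y + j := by positivity
    have hΓx := Gamma_add_nat_eq_factorial_mul_choose hxi j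
    have hΓy := Gamma_add_nat_eq_factorial_mul_choose hyj i
    have := Gamma_pos_of_pos hxi
    have := Gamma_pos_of_pos hyj
    have := choose_pos_of_lt (show (j : ℝ) - 1 < x + i + j - 1 by linarith)
    have := choose_pos_of_lt (show (i : ℝ) - 1 < y + j + i - 1 by linarith)
    push_cast
    rw [← add_assoc, ← add_assoc, hΓx, add_right_comm y, hΓy, besselSeriesTerm, besselSeriesTerm,
      pow_add]
    field_simp
  rw [sum_congr rfl hterm, ← sum_div, ← mul_sum, ← Ring.add_choose_eq m (.all _ _),
    show y + m - 1 + (x + m - 1) = x + y + 2 * m - 2 by ring]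

theorem sum_antidiagonal_besselSeriesTerm_mul_lt (ha : 0 < a) (ht : 0 < t) (m : ℕ) :
    ∑ p ∈ antidiagonal m, besselSeriesTerm a t p.1 * besselSeriesTerm (a + 2) t p.2
      < ∑ p ∈ antidiagonal m, besselSeriesTerm (a + 1) t p.1 * besselSeriesTerm (a + 1) t p.2 := by
  have ham : 0 < a + m := by positivity
  rw [sum_antidiagonal_besselSeriesTerm_mul ha (by positivity),
    sum_antidiagonal_besselSeriesTerm_mul (by positivity) (by positivity),
    show a + (a + 2) + 2 * (m : ℝ) - 2 = a + 1 + (a + 1) + 2 * m - 2 by ring,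
    show a + 2 + (m : ℝ) = a + m + 2 by ring, show a + 1 + (m : ℝ) = a + m + 1 by ring, ← sq]
  have := choose_pos_of_lt (show (m : ℝ) - 1 < a + 1 + (a + 1) + 2 * m - 2 by linarith)
  have := Gamma_pos_of_pos ham
  gcongr
  exact Gamma_add_one_sq_lt ham

theorem besselSeries_mul_besselSeries_add_two_lt_sq (ha : 0 < a) (ht : 0 < t) :
    besselSeries a t * besselSeries (a + 2) t < besselSeries (a + 1) t ^ 2 := by
  have summable_norm (b : ℝ) (hb : 0 < b) : Summable fun k => ‖besselSeriesTerm b t k‖ :=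
    (summable_besselSeriesTerm hb ht).abs
  rw [besselSeries, besselSeries, sq, besselSeries,
    tsum_mul_tsum_eq_tsum_sum_antidiagonal_of_summable_norm (summable_norm a ha)
      (summable_norm (a + 2) (by positivity)),
    tsum_mul_tsum_eq_tsum_sum_antidiagonal_of_summable_norm (summable_norm (a + 1) (by positivity))
      (summable_norm (a + 1) (by positivity))]
  refine Summable.tsum_lt_tsum_of_nonneg (i := 0) (fun m => ?_)
    (fun m => (sum_antidiagonal_besselSeriesTerm_mul_lt ha ht m).le)
    (sum_antidiagonal_besselSeriesTerm_mul_lt ha ht 0) ?_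
  · exact sum_nonneg fun p _ =>
      mul_nonneg (besselSeriesTerm_pos ha ht p.1).le
        (besselSeriesTerm_pos (by positivity) ht p.2).le
  · exact summable_sum_mul_antidiagonal_of_summable_mul
      (summable_mul_of_summable_norm (summable_norm (a + 1) (by positivity))
        (summable_norm (a + 1) (by positivity)))

theorem besselSeries_add_two_div_lt (ha : 0 < a) (ht : 0 < t) :
    besselSeries (a + 2) t / besselSeries (a + 1) t
      < besselSeries (a + 1) t / besselSeries a t := by
  have := besselSeries_pos ha ht
  have := besselSeries_pos (a := a + 1) (by positivity) ht
  rw [div_lt_div_iff₀ (by positivity) (by positivity)]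
  nlinarith [besselSeries_mul_besselSeries_add_two_lt_sq ha ht]

end BesselSeries

theorem besselI_eq_rpow_mul_besselSeries (ν r : ℝ) :
    besselI ν r = (r / 2) ^ ν * besselSeries (ν + 1) ((r / 2) ^ 2) := by
  simp only [besselI, besselSeries, besselSeriesTerm, pow_mul, add_right_comm ν]

theorem Pfun_eq_besselSeries_div {r : ℝ} (hr : 0 < r) (n : ℕ) :
    Pfun n r =
      besselSeries (n + 3 / 2 + 1) ((r / 2) ^ 2) / besselSeries (n + 3 / 2) ((r / 2) ^ 2) / 2 := by
  have hr2 : 0 < r / 2 := by positivity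
  have := besselSeries_pos (a := n + 3 / 2) (by positivity) (by positivity : 0 < (r / 2) ^ 2)
  rw [Pfun, besselI_eq_rpow_mul_besselSeries, besselI_eq_rpow_mul_besselSeries,
    show (n : ℝ) + 3 / 2 = n + 1 / 2 + 1 by ring, Real.rpow_add_one hr2.ne']
  field_simp

theorem Pfun_strict_anti_in_n (n : ℕ) (r : ℝ) (hr : 0 < r) :
    Pfun n r > Pfun (n + 1) r := by
  have key := besselSeries_add_two_div_lt (a := n + 3 / 2) (t := (r / 2) ^ 2)
    (by positivity) (by positivity)
  rw [gt_iff_lt, Pfun_eq_besselSeries_div hr, Pfun_eq_besselSeries_div hr,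
    div_lt_div_iff_of_pos_right two_pos]
  convert key using 2 <;> congr 1 <;> push_cast <;> ring
end
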